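/- For closure spaces A and B, the following are equivalent: (a) A and B are both polarized (each polar x^⊥ = {y : cl{x} ∩ cl{y} = cl(∅)} is closed) or one of them has only one closed set; (b) the complete lattices 𝒞A and 𝒞B of closed sets are pseudocomplemented, or one is a singleton; (c) the tensor product A ⊗ B is a pseudocomplemented complete lattice. -/
import Mathlib

/-- A closure system: a family of subsets closed under arbitrary intersections. -/
def IsClosureSystem {α : Type*} (𝒞 : Set (Set α)) : Prop :=
  ∀ 𝒮 ⊆ 𝒞, ⋂₀ 𝒮 ∈ 𝒞

/-- Closure of a set with respect to a closure system. -/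
def clOf {α : Type*} (𝒞 : Set (Set α)) (X : Set α) : Set α :=
  ⋂₀ {F | F ∈ 𝒞 ∧ X ⊆ F}

/-- A tensor between closure spaces: all slices in either coordinate are closed. -/
def IsTensorRel {α β : Type*} (𝒞A : Set (Set α)) (𝒞B : Set (Set β)) (T : Set (α × β)) : Prop :=
  (∀ x : α, {y | (x, y) ∈ T} ∈ 𝒞B) ∧ (∀ y : β, {x | (x, y) ∈ T} ∈ 𝒞A)

/-- A closure space is polarized if each polar `x^⊥ = {y : cl{x} ∩ cl{y} = cl ∅}` is closed. -/
def Polarized {α : Type*} (𝒞 : Set (Set α)) : Prop :=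
  ∀ x : α, {y | clOf 𝒞 {x} ∩ clOf 𝒞 {y} = clOf 𝒞 ∅} ∈ 𝒞

/-- The complete lattice of closed sets (meets: intersections, bottom: `cl ∅`) is
pseudocomplemented. -/
def PseudocomplementedCS {α : Type*} (𝒞 : Set (Set α)) : Prop :=
  ∀ F ∈ 𝒞, ∃ G ∈ 𝒞, F ∩ G = clOf 𝒞 ∅ ∧ ∀ G' ∈ 𝒞, F ∩ G' = clOf 𝒞 ∅ → G' ⊆ G

section Aux

variable {α β : Type*}

lemma univ_mem' {𝒞 : Set (Set α)} (h : IsClosureSystem 𝒞) : Set.univ ∈ 𝒞 := by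
  have h0 := h ∅ (Set.empty_subset _)
  simpa using h0

lemma clOf_mem' {𝒞 : Set (Set α)} (h : IsClosureSystem 𝒞) (X : Set α) : clOf 𝒞 X ∈ 𝒞 :=
  h _ fun _ hF => hF.1

lemma subset_clOf' (𝒞 : Set (Set α)) (X : Set α) : X ⊆ clOf 𝒞 X :=
  fun _ hx => Set.mem_sInter.2 fun _ hF => hF.2 hx

lemma clOf_min' {𝒞 : Set (Set α)} {F X : Set α} (hF : F ∈ 𝒞) (hX : X ⊆ F) :
    clOf 𝒞 X ⊆ F := fun _ hx => Set.mem_sInter.1 hx F ⟨hF, hX⟩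

lemma bot_le' {𝒞 : Set (Set α)} {F : Set α} (hF : F ∈ 𝒞) : clOf 𝒞 ∅ ⊆ F :=
  clOf_min' hF (Set.empty_subset _)

lemma clpt_le' {𝒞 : Set (Set α)} {F : Set α} {x : α} (hF : F ∈ 𝒞) (hx : x ∈ F) :
    clOf 𝒞 {x} ⊆ F := clOf_min' hF (Set.singleton_subset_iff.2 hx)

lemma mem_clpt' (𝒞 : Set (Set α)) (x : α) : x ∈ clOf 𝒞 {x} :=
  subset_clOf' 𝒞 {x} rfl

lemma clpt_bot' {𝒞 : Set (Set α)} (h : IsClosureSystem 𝒞) {x : α}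
    (hx : x ∈ clOf 𝒞 ∅) : clOf 𝒞 {x} = clOf 𝒞 ∅ :=
  Set.Subset.antisymm (clpt_le' (clOf_mem' h ∅) hx) (bot_le' (clOf_mem' h {x}))

lemma inter_cl_bot_left' {𝒞 : Set (Set α)} (h : IsClosureSystem 𝒞) {x : α}
    (hx : x ∈ clOf 𝒞 ∅) (y : α) : clOf 𝒞 {x} ∩ clOf 𝒞 {y} = clOf 𝒞 ∅ := by
  rw [clpt_bot' h hx]
  exact Set.inter_eq_left.2 (bot_le' (clOf_mem' h _))

lemma inter_cl_bot_right' {𝒞 : Set (Set α)} (h : IsClosureSystem 𝒞) {y : α}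
    (hy : y ∈ clOf 𝒞 ∅) (x : α) : clOf 𝒞 {x} ∩ clOf 𝒞 {y} = clOf 𝒞 ∅ := by
  rw [clpt_bot' h hy]
  exact Set.inter_eq_right.2 (bot_le' (clOf_mem' h _))

lemma bot_subset_inter' {𝒞 : Set (Set α)} (h : IsClosureSystem 𝒞) (x y : α) :
    clOf 𝒞 ∅ ⊆ clOf 𝒞 {x} ∩ clOf 𝒞 {y} :=
  Set.subset_inter (bot_le' (clOf_mem' h _)) (bot_le' (clOf_mem' h _))

lemma nondeg' {𝒞 : Set (Set α)} (h : IsClosureSystem 𝒞) (hne : 𝒞 ≠ {Set.univ}) :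
    ∃ b, b ∉ clOf 𝒞 ∅ := by
  by_contra hb
  push_neg at hb
  apply hne
  apply Set.Subset.antisymm
  · intro F hF
    have hsub : Set.univ ⊆ F := fun z _ => bot_le' hF (hb z)
    exact Set.mem_singleton_iff.2 (Set.univ_subset_iff.1 hsub)
  · intro F hF
    rw [Set.mem_singleton_iff.1 hF]
    exact univ_mem' h

lemma deg_bot' {𝒞 : Set (Set α)} (h : IsClosureSystem 𝒞) (hd : 𝒞 = {Set.univ}) :
    clOf 𝒞 ∅ = Set.univ := by
  have hm := clOf_mem' h (∅ : Set α)
  have hm2 : clOf 𝒞 ∅ ∈ ({Set.univ} : Set (Set α)) := by rw [← hd]; exact hm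
  exact Set.mem_singleton_iff.1 hm2

lemma polarized_iff_pc' {𝒞 : Set (Set α)} (h : IsClosureSystem 𝒞) :
    Polarized 𝒞 ↔ PseudocomplementedCS 𝒞 := by
  constructor
  · intro hp F hF
    refine ⟨⋂₀ ((fun x => {y | clOf 𝒞 {x} ∩ clOf 𝒞 {y} = clOf 𝒞 ∅}) '' F),
      h _ ?_, ?_, ?_⟩
    · rintro S ⟨x, _, rfl⟩; exact hp x
    · apply Set.Subset.antisymm
      · rintro z ⟨hzF, hzG⟩
        have hz : clOf 𝒞 {z} ∩ clOf 𝒞 {z} = clOf 𝒞 ∅ :=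
          Set.mem_sInter.1 hzG _ ⟨z, hzF, rfl⟩
        have hzz : z ∈ clOf 𝒞 {z} ∩ clOf 𝒞 {z} := ⟨mem_clpt' 𝒞 z, mem_clpt' 𝒞 z⟩
        rw [hz] at hzz
        exact hzz
      · intro z hz
        refine ⟨bot_le' hF hz, Set.mem_sInter.2 ?_⟩
        rintro S ⟨x, hxF, rfl⟩
        exact inter_cl_bot_right' h hz x
    · intro G' hG' hFG' y hy
      refine Set.mem_sInter.2 ?_
      rintro S ⟨x, hxF, rfl⟩
      show clOf 𝒞 {x} ∩ clOf 𝒞 {y} = clOf 𝒞 ∅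
      apply Set.Subset.antisymm
      · rw [← hFG']
        exact Set.inter_subset_inter (clpt_le' hF hxF) (clpt_le' hG' hy)
      · exact bot_subset_inter' h x y
  · intro hpc x
    obtain ⟨G, hG, hFG, hmax⟩ := hpc (clOf 𝒞 {x}) (clOf_mem' h _)
    have hkey : {y | clOf 𝒞 {x} ∩ clOf 𝒞 {y} = clOf 𝒞 ∅} = G := by
      ext y
      constructor
      · intro hy
        exact hmax (clOf 𝒞 {y}) (clOf_mem' h _) hy (mem_clpt' 𝒞 y)
      · intro hy
        show clOf 𝒞 {x} ∩ clOf 𝒞 {y} = clOf 𝒞 ∅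
        apply Set.Subset.antisymm
        · rw [← hFG]
          exact Set.inter_subset_inter (le_refl _) (clpt_le' hG hy)
        · exact bot_subset_inter' h x y
    rw [hkey]; exact hG

/-- The bottom tensor. -/
def BotR (𝒞A : Set (Set α)) (𝒞B : Set (Set β)) : Set (α × β) :=
  (clOf 𝒞A ∅) ×ˢ (Set.univ : Set β) ∪ (Set.univ : Set α) ×ˢ (clOf 𝒞B ∅)

lemma mem_BotR {𝒞A : Set (Set α)} {𝒞B : Set (Set β)} {p : α × β} :
    p ∈ BotR 𝒞A 𝒞B ↔ p.1 ∈ clOf 𝒞A ∅ ∨ p.2 ∈ clOf 𝒞B ∅ := by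
  simp [BotR]

lemma BotR_le {𝒞A : Set (Set α)} {𝒞B : Set (Set β)} {T : Set (α × β)}
    (hT : IsTensorRel 𝒞A 𝒞B T) : BotR 𝒞A 𝒞B ⊆ T := by
  rintro ⟨x, y⟩ hp
  rcases mem_BotR.1 hp with hx | hy
  · exact bot_le' (hT.2 y) hx
  · exact bot_le' (hT.1 x) hy

lemma mem_tensor_cl {𝒞A : Set (Set α)} {𝒞B : Set (Set β)} {T : Set (α × β)}
    (hT : IsTensorRel 𝒞A 𝒞B T) {x a : α} {y b : β} (hxy : (x, y) ∈ T)
    (ha : a ∈ clOf 𝒞A {x}) (hb : b ∈ clOf 𝒞B {y}) : (a, b) ∈ T := by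
  have h1 : (a, y) ∈ T := clpt_le' (hT.2 y) hxy ha
  exact clpt_le' (hT.1 a) h1 hb

/-- Pseudocomplementedness of the tensor lattice. -/
def PCT (𝒞A : Set (Set α)) (𝒞B : Set (Set β)) : Prop :=
  ∀ T, IsTensorRel 𝒞A 𝒞B T → ∃ S, IsTensorRel 𝒞A 𝒞B S ∧ T ∩ S = BotR 𝒞A 𝒞B ∧
    ∀ S', IsTensorRel 𝒞A 𝒞B S' → T ∩ S' = BotR 𝒞A 𝒞B → S' ⊆ S

lemma pol_pol_PCT {𝒞A : Set (Set α)} {𝒞B : Set (Set β)} (hA : IsClosureSystem 𝒞A)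
    (hB : IsClosureSystem 𝒞B) (hpA : Polarized 𝒞A) (hpB : Polarized 𝒞B) :
    PCT 𝒞A 𝒞B := by
  intro T hT
  refine ⟨{p | ∀ q ∈ T,
      clOf 𝒞A {q.1} ∩ clOf 𝒞A {p.1} = clOf 𝒞A ∅ ∨
      clOf 𝒞B {q.2} ∩ clOf 𝒞B {p.2} = clOf 𝒞B ∅}, ⟨?_, ?_⟩, ?_, ?_⟩
  · intro x
    have hrw : {y | (x, y) ∈ ({p | ∀ q ∈ T,
        clOf 𝒞A {q.1} ∩ clOf 𝒞A {p.1} = clOf 𝒞A ∅ ∨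
        clOf 𝒞B {q.2} ∩ clOf 𝒞B {p.2} = clOf 𝒞B ∅} : Set (α × β))} =
        ⋂₀ {G | ∃ q ∈ T, ¬ (clOf 𝒞A {q.1} ∩ clOf 𝒞A {x} = clOf 𝒞A ∅) ∧
          G = {y | clOf 𝒞B {q.2} ∩ clOf 𝒞B {y} = clOf 𝒞B ∅}} := by
      ext y
      simp only [Set.mem_setOf_eq, Set.mem_sInter]
      constructor
      · rintro hy G ⟨q, hq, hnq, rfl⟩
        rcases hy q hq with h1 | h2
        · exact absurd h1 hnq
        · exact h2
      · intro hy q hq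
        by_cases hcase : clOf 𝒞A {q.1} ∩ clOf 𝒞A {x} = clOf 𝒞A ∅
        · exact Or.inl hcase
        · exact Or.inr (hy _ ⟨q, hq, hcase, rfl⟩)
    rw [hrw]
    apply hB
    rintro G ⟨q, _, _, rfl⟩
    exact hpB q.2
  · intro y
    have hrw : {x | (x, y) ∈ ({p | ∀ q ∈ T,
        clOf 𝒞A {q.1} ∩ clOf 𝒞A {p.1} = clOf 𝒞A ∅ ∨
        clOf 𝒞B {q.2} ∩ clOf 𝒞B {p.2} = clOf 𝒞B ∅} : Set (α × β))} =
        ⋂₀ {G | ∃ q ∈ T, ¬ (clOf 𝒞B {q.2} ∩ clOf 𝒞B {y} = clOf 𝒞B ∅) ∧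
          G = {x | clOf 𝒞A {q.1} ∩ clOf 𝒞A {x} = clOf 𝒞A ∅}} := by
      ext x
      simp only [Set.mem_setOf_eq, Set.mem_sInter]
      constructor
      · rintro hy G ⟨q, hq, hnq, rfl⟩
        rcases hy q hq with h1 | h2
        · exact h1
        · exact absurd h2 hnq
      · intro hx q hq
        by_cases hcase : clOf 𝒞B {q.2} ∩ clOf 𝒞B {y} = clOf 𝒞B ∅
        · exact Or.inr hcase
        · exact Or.inl (hx _ ⟨q, hq, hcase, rfl⟩)
    rw [hrw]
    apply hA
    rintro G ⟨q, _, _, rfl⟩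
    exact hpA q.1
  · apply Set.Subset.antisymm
    · rintro ⟨x, y⟩ ⟨hxyT, hxyS⟩
      rcases hxyS (x, y) hxyT with h1 | h2
      · refine mem_BotR.2 (Or.inl ?_)
        have hxx : x ∈ clOf 𝒞A {x} ∩ clOf 𝒞A {x} := ⟨mem_clpt' _ x, mem_clpt' _ x⟩
        rw [h1] at hxx
        exact hxx
      · refine mem_BotR.2 (Or.inr ?_)
        have hyy : y ∈ clOf 𝒞B {y} ∩ clOf 𝒞B {y} := ⟨mem_clpt' _ y, mem_clpt' _ y⟩
        rw [h2] at hyy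
        exact hyy
    · rintro ⟨x, y⟩ hp
      refine ⟨BotR_le hT hp, ?_⟩
      rcases mem_BotR.1 hp with hx | hy
      · intro q _
        exact Or.inl (inter_cl_bot_right' hA hx q.1)
      · intro q _
        exact Or.inr (inter_cl_bot_right' hB hy q.2)
  · rintro S' hS' hTS' ⟨x, y⟩ hxy q hq
    by_cases hcase : clOf 𝒞A {q.1} ∩ clOf 𝒞A {x} = clOf 𝒞A ∅
    · exact Or.inl hcase
    right
    apply Set.Subset.antisymm
    · intro b hb
      have hex : ∃ a, a ∈ clOf 𝒞A {q.1} ∩ clOf 𝒞A {x} ∧ a ∉ clOf 𝒞A ∅ := by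
        by_contra hcon
        push_neg at hcon
        exact hcase (Set.Subset.antisymm (fun a ha => hcon a ha)
          (bot_subset_inter' hA q.1 x))
      obtain ⟨a, ⟨haq, hax⟩, haB⟩ := hex
      have h1 : (a, b) ∈ T := mem_tensor_cl hT hq haq hb.1
      have h2 : (a, b) ∈ S' := mem_tensor_cl hS' hxy hax hb.2
      have h3 : (a, b) ∈ BotR 𝒞A 𝒞B := by rw [← hTS']; exact ⟨h1, h2⟩
      rcases mem_BotR.1 h3 with h | h
      · exact absurd h haB
      · exact h
    · exact bot_subset_inter' hB q.2 y

lemma degA_PCT {𝒞A : Set (Set α)} {𝒞B : Set (Set β)} (hA : IsClosureSystem 𝒞A)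
    (hB : IsClosureSystem 𝒞B) (hd : 𝒞A = {Set.univ}) : PCT 𝒞A 𝒞B := by
  have hbot : clOf 𝒞A ∅ = Set.univ := deg_bot' hA hd
  have hBotR : BotR 𝒞A 𝒞B = Set.univ := by
    apply Set.eq_univ_of_forall
    intro p
    exact mem_BotR.2 (Or.inl (by rw [hbot]; trivial))
  intro T hT
  have hTuniv : T = Set.univ := by
    apply Set.eq_univ_of_forall
    rintro ⟨x, y⟩
    have hm := hT.2 y
    rw [hd, Set.mem_singleton_iff, Set.eq_univ_iff_forall] at hm
    exact hm x
  refine ⟨Set.univ, ⟨fun x => ?_, fun y => ?_⟩, ?_, fun S' _ _ => Set.subset_univ _⟩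
  · have : {y | (x, y) ∈ (Set.univ : Set (α × β))} = Set.univ := by ext; simp
    rw [this]; exact univ_mem' hB
  · have : {x | (x, y) ∈ (Set.univ : Set (α × β))} = Set.univ := by ext; simp
    rw [this]; exact univ_mem' hA
  · rw [hTuniv, hBotR]; simp

lemma PCT_swap {𝒞A : Set (Set α)} {𝒞B : Set (Set β)} (hpc : PCT 𝒞A 𝒞B) : PCT 𝒞B 𝒞A := by
  intro T hT
  obtain ⟨S, hS, hTS, hmax⟩ := hpc {p | (p.2, p.1) ∈ T} ⟨fun x => hT.2 x, fun y => hT.1 y⟩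
  refine ⟨{p | (p.2, p.1) ∈ S}, ⟨fun y => hS.2 y, fun x => hS.1 x⟩, ?_, ?_⟩
  · ext ⟨b, a⟩
    have h := Set.ext_iff.1 hTS (a, b)
    simp only [Set.mem_inter_iff, Set.mem_setOf_eq, mem_BotR] at h ⊢
    tauto
  · intro S' hS' hTS' p hp
    have h' : {p : α × β | (p.2, p.1) ∈ T} ∩ {p : α × β | (p.2, p.1) ∈ S'} =
        BotR 𝒞A 𝒞B := by
      ext ⟨a, b⟩
      have h := Set.ext_iff.1 hTS' (b, a)
      simp only [Set.mem_inter_iff, Set.mem_setOf_eq, mem_BotR] at h ⊢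
      tauto
    exact hmax {p | (p.2, p.1) ∈ S'} ⟨fun x => hS'.2 x, fun y => hS'.1 y⟩ h' hp

lemma cross_tensor {𝒞A : Set (Set α)} {𝒞B : Set (Set β)} (hA : IsClosureSystem 𝒞A)
    (hB : IsClosureSystem 𝒞B) {C : Set α} (hC : C ∈ 𝒞A) :
    IsTensorRel 𝒞A 𝒞B (C ×ˢ (Set.univ : Set β) ∪ (Set.univ : Set α) ×ˢ clOf 𝒞B ∅) := by
  constructor
  · intro x
    by_cases hx : x ∈ C
    · have : {y | (x, y) ∈ C ×ˢ (Set.univ : Set β) ∪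
          (Set.univ : Set α) ×ˢ clOf 𝒞B ∅} = Set.univ := by
        ext y; simp [hx]
      rw [this]; exact univ_mem' hB
    · have : {y | (x, y) ∈ C ×ˢ (Set.univ : Set β) ∪
          (Set.univ : Set α) ×ˢ clOf 𝒞B ∅} = clOf 𝒞B ∅ := by
        ext y; simp [hx]
      rw [this]; exact clOf_mem' hB ∅
  · intro y
    by_cases hy : y ∈ clOf 𝒞B ∅
    · have : {x | (x, y) ∈ C ×ˢ (Set.univ : Set β) ∪
          (Set.univ : Set α) ×ˢ clOf 𝒞B ∅} = Set.univ := by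
        ext x; simp [hy]
      rw [this]; exact univ_mem' hA
    · have : {x | (x, y) ∈ C ×ˢ (Set.univ : Set β) ∪
          (Set.univ : Set α) ×ˢ clOf 𝒞B ∅} = C := by
        ext x; simp [hy]
      rw [this]; exact hC

lemma PCT_polarized {𝒞A : Set (Set α)} {𝒞B : Set (Set β)} (hA : IsClosureSystem 𝒞A)
    (hB : IsClosureSystem 𝒞B) (hpc : PCT 𝒞A 𝒞B) {b₀ : β} (hb₀ : b₀ ∉ clOf 𝒞B ∅) :
    Polarized 𝒞A := by
  intro x
  obtain ⟨S, hS, hTS, hmax⟩ := hpc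
    (clOf 𝒞A {x} ×ˢ (Set.univ : Set β) ∪ (Set.univ : Set α) ×ˢ clOf 𝒞B ∅)
    (cross_tensor hA hB (clOf_mem' hA _))
  have hkey : {y | clOf 𝒞A {x} ∩ clOf 𝒞A {y} = clOf 𝒞A ∅} = {z | (z, b₀) ∈ S} := by
    ext z
    constructor
    · intro hz
      have hS' := cross_tensor hA hB (𝒞B := 𝒞B) (clOf_mem' hA {z})
      have hint : (clOf 𝒞A {x} ×ˢ (Set.univ : Set β) ∪ (Set.univ : Set α) ×ˢ clOf 𝒞B ∅) ∩
          (clOf 𝒞A {z} ×ˢ (Set.univ : Set β) ∪ (Set.univ : Set α) ×ˢ clOf 𝒞B ∅) =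
          BotR 𝒞A 𝒞B := by
        ext ⟨a, b⟩
        simp only [Set.mem_inter_iff, Set.mem_union, Set.mem_prod, Set.mem_univ,
          and_true, true_and, mem_BotR]
        constructor
        · rintro ⟨hax | hb, haz | hb'⟩
          · left
            have : a ∈ clOf 𝒞A {x} ∩ clOf 𝒞A {z} := ⟨hax, haz⟩
            rw [hz] at this
            exact this
          · exact Or.inr hb'
          · exact Or.inr hb
          · exact Or.inr hb
        · rintro (ha | hb)
          · exact ⟨Or.inl (bot_le' (clOf_mem' hA _) ha),
              Or.inl (bot_le' (clOf_mem' hA _) ha)⟩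
          · exact ⟨Or.inr hb, Or.inr hb⟩
      exact hmax _ hS' hint (Or.inl ⟨mem_clpt' 𝒞A z, Set.mem_univ _⟩)
    · intro hzS
      show clOf 𝒞A {x} ∩ clOf 𝒞A {z} = clOf 𝒞A ∅
      apply Set.Subset.antisymm
      · rintro a ⟨hax, haz⟩
        have h1 : (a, b₀) ∈ clOf 𝒞A {x} ×ˢ (Set.univ : Set β) ∪
            (Set.univ : Set α) ×ˢ clOf 𝒞B ∅ := Or.inl ⟨hax, Set.mem_univ _⟩
        have h2 : (a, b₀) ∈ S := clpt_le' (hS.2 b₀) hzS haz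
        have h3 : (a, b₀) ∈ BotR 𝒞A 𝒞B := by rw [← hTS]; exact ⟨h1, h2⟩
        rcases mem_BotR.1 h3 with h | h
        · exact h
        · exact absurd h hb₀
      · exact bot_subset_inter' hA x z
  rw [hkey]
  exact hS.2 b₀

end Aux

/-- For closure spaces `A`, `B`, the following are equivalent: (a) `A` and `B`
are polarized, or one has only one closed set; (b) the closed-set lattices `𝒞A`, `𝒞B` are
pseudocomplemented, or one is a singleton; (c) the tensor product `A ⊗ B` (bottom:
`∅̄ = (⊥_A × B) ∪ (A × ⊥_B)`, meets: intersections) is pseudocomplemented. -/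
theorem stmt_14 {α β : Type*} (𝒞A : Set (Set α)) (𝒞B : Set (Set β))
    (hA : IsClosureSystem 𝒞A) (hB : IsClosureSystem 𝒞B) :
    let botR : Set (α × β) :=
      (clOf 𝒞A ∅) ×ˢ (Set.univ : Set β) ∪ (Set.univ : Set α) ×ˢ (clOf 𝒞B ∅)
    let pcTensor : Prop := ∀ T, IsTensorRel 𝒞A 𝒞B T →
      ∃ S, IsTensorRel 𝒞A 𝒞B S ∧ T ∩ S = botR ∧
        ∀ S', IsTensorRel 𝒞A 𝒞B S' → T ∩ S' = botR → S' ⊆ S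
    (((Polarized 𝒞A ∧ Polarized 𝒞B) ∨ 𝒞A = {Set.univ} ∨ 𝒞B = {Set.univ}) ↔ pcTensor) ∧
    (((PseudocomplementedCS 𝒞A ∧ PseudocomplementedCS 𝒞B) ∨
        𝒞A = {Set.univ} ∨ 𝒞B = {Set.univ}) ↔ pcTensor) := by
  intro botR pcTensor
  have main : ((Polarized 𝒞A ∧ Polarized 𝒞B) ∨ 𝒞A = {Set.univ} ∨ 𝒞B = {Set.univ}) ↔
      PCT 𝒞A 𝒞B := by
    constructor
    · rintro (⟨h1, h2⟩ | hd | hd)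
      · exact pol_pol_PCT hA hB h1 h2
      · exact degA_PCT hA hB hd
      · exact PCT_swap (degA_PCT hB hA hd)
    · intro hpc
      by_cases hdA : 𝒞A = {Set.univ}
      · exact Or.inr (Or.inl hdA)
      by_cases hdB : 𝒞B = {Set.univ}
      · exact Or.inr (Or.inr hdB)
      obtain ⟨b₀, hb₀⟩ := nondeg' hB hdB
      obtain ⟨a₀, ha₀⟩ := nondeg' hA hdA
      exact Or.inl ⟨PCT_polarized hA hB hpc hb₀, PCT_polarized hB hA (PCT_swap hpc) ha₀⟩
  have main2 : ((PseudocomplementedCS 𝒞A ∧ PseudocomplementedCS 𝒞B) ∨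
      𝒞A = {Set.univ} ∨ 𝒞B = {Set.univ}) ↔ PCT 𝒞A 𝒞B :=
    (or_congr (and_congr (polarized_iff_pc' hA) (polarized_iff_pc' hB)) Iff.rfl).symm.trans
      main
  exact ⟨main, main2⟩
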